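/- arXiv:0906.1780 — 2 statements merged into one kernel-verified Lean document; each statement's English description precedes it below -/
import Mathlib

section
/- Let p ∈ OFS with p_1 ≠ gcd(p). Then fw(p) ≥ 2·p_1. -/
/-- `OFS p`: `p` is a strictly increasing nonempty finite sequence of positive integers. -/
def OFS (p : List ℕ) : Prop := p ≠ [] ∧ p.Pairwise (· < ·) ∧ ∀ x ∈ p, 0 < x

/-- The reduction operation `R`. -/
def R : List ℕ → List ℕ
  | [] => []
  | [a] => [a]
  | a :: b :: rest => (((b :: rest).map (fun x => x - a)).insert a).mergeSort (· ≤ ·)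

/-- `max(p)` -/
def maxL (p : List ℕ) : ℕ := p.foldr max 0

/-- `gcd(p)` -/
def gcdL (p : List ℕ) : ℕ := p.foldr Nat.gcd 0

/-- Fuel-based auxiliary for `f`; `maxL p + 1` fuel always suffices since
`maxL` strictly decreases under `R` for lists of length `> 1`. -/
def faux : ℕ → List ℕ → ℕ
  | _, [] => 0
  | _, [a] => a
  | 0, _ => 0
  | fuel+1, p => p.headI + faux fuel (R p)

/-- The function `f` of Castelli–Mignosi–Restivo: `f p = p₁` if `|p| = 1`,
and `f p = p₁ + f (R p)` otherwise. -/
def f (p : List ℕ) : ℕ := faux (maxL p + 1) p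

/-- The function `fw` of Tijdeman–Zamboni. -/
def fw (p : List ℕ) : ℕ :=
  if h : 1 < p.length ∧ gcdL p.dropLast = gcdL p ∧ f p.dropLast ≤ maxL p
  then fw p.dropLast
  else f p
termination_by p.length
decreasing_by
  simp only [List.length_dropLast]
  omega

/-- The Fine–Wilf graph `G(p,k)` on vertex set `{1,…,k}` (represented by `Fin k`,
with `v : Fin k` standing for the integer `v+1`); `i` and `j` are adjacent iff
`|i - j|` is an entry of `p`. -/
def G (p : List ℕ) (k : ℕ) : SimpleGraph (Fin k) where
  Adj i j := i ≠ j ∧ (((j : ℕ) - (i : ℕ)) ∈ p ∨ ((i : ℕ) - (j : ℕ)) ∈ p)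
  symm := by
    constructor
    intro i j h
    exact ⟨h.1.symm, h.2.symm⟩
  loopless := by
    constructor
    intro i h
    exact h.1 rfl

/-- `p` is trim. -/
def Trim (p : List ℕ) : Prop :=
  p.length = 1 ∨ (1 < p.length ∧
    (gcdL p ≠ gcdL p.dropLast ∨ (gcdL p = gcdL p.dropLast ∧ maxL p < f p.dropLast)))

lemma le_maxL_of_mem {x : ℕ} {l : List ℕ} (h : x ∈ l) : x ≤ maxL l := by
  induction l with
  | nil => simp at h
  | cons a t ih =>
    rcases List.mem_cons.1 h with h | h
    · simp [maxL, h]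
    · simp only [maxL, List.foldr_cons]
      exact le_max_of_le_right (ih h)
lemma maxL_mem_or_zero (l : List ℕ) : maxL l = 0 ∨ maxL l ∈ l := by
  induction l with
  | nil => simp [maxL]
  | cons a t ih =>
    right
    show max a (maxL t) ∈ a :: t
    rcases ih with h | h
    · rw [h, Nat.max_eq_left (Nat.zero_le a)]; simp
    · rcases max_choice a (maxL t) with hc | hc <;> rw [hc]
      · simp
      · exact List.mem_cons_of_mem _ h
lemma R_perm (a b : ℕ) (rest : List ℕ) :
    (R (a :: b :: rest)).Perm (((b :: rest).map (fun x => x - a)).insert a) :=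
  List.mergeSort_perm _ _
lemma mem_R_iff {x a b : ℕ} {rest : List ℕ} :
    x ∈ R (a :: b :: rest) ↔ x = a ∨ ∃ y ∈ b :: rest, x = y - a := by
  rw [(R_perm a b rest).mem_iff, List.mem_insert_iff]
  simp only [List.mem_map, List.mem_cons]
  aesop
lemma headI_mem_R (a b : ℕ) (rest : List ℕ) : a ∈ R (a :: b :: rest) :=
  mem_R_iff.2 (Or.inl rfl)
lemma R_ne_nil {p : List ℕ} (hp : p ≠ []) : R p ≠ [] := by
  match p with
  | [a] => simp [R]
  | a :: b :: rest =>
    intro hnil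
    have := headI_mem_R a b rest
    rw [hnil] at this
    simp at this
lemma ofs_cons_lt {a : ℕ} {t : List ℕ} (hs : (a :: t).Pairwise (· < ·)) :
    ∀ x ∈ t, a < x := by
  intro x hx
  exact (List.pairwise_cons.1 hs).1 x hx
lemma ofs_R {p : List ℕ} (hp : OFS p) : OFS (R p) := by
  obtain ⟨hne, hs, hpos⟩ := hp
  match p with
  | [a] => exact ⟨by simp [R], by simp [R], by simpa [R] using hpos⟩
  | a :: b :: rest =>
    have ha : 0 < a := hpos a (by simp)
    have hlt : ∀ x ∈ b :: rest, a < x := ofs_cons_lt hs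
    refine ⟨R_ne_nil (by simp), ?_, ?_⟩
    · -- sorted
      have hsle : (R (a :: b :: rest)).Pairwise (· ≤ ·) := by
        have := List.pairwise_mergeSort (le := fun x y : ℕ => decide (x ≤ y))
          (fun x y z hxy hyz => by
            simp only [decide_eq_true_eq] at *; omega)
          (fun x y => by simp only [Bool.or_eq_true, decide_eq_true_eq]; omega)
          (((b :: rest).map (fun x => x - a)).insert a)
        refine this.imp ?_
        intro x y hxy
        simpa using hxy
      have hnd : (R (a :: b :: rest)).Nodup := by
        refine (R_perm a b rest).nodup_iff.2 ?_
        refine List.Nodup.insert ?_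
        have hts : (b :: rest).Pairwise (· < ·) := (List.pairwise_cons.1 hs).2
        have : ((b :: rest).map (fun x => x - a)).Pairwise (· < ·) := by
          rw [List.pairwise_map]
          refine hts.imp_of_mem ?_
          intro x y hx hy hxy
          have := hlt x hx
          omega
        exact this.nodup
      exact (hsle.and hnd).imp (fun h => lt_of_le_of_ne h.1 h.2)
    · intro x hx
      rcases mem_R_iff.1 hx with rfl | ⟨y, hy, rfl⟩
      · exact ha
      · have := hlt y hy; omega
lemma maxL_R_lt {a b : ℕ} {rest : List ℕ} (hp : OFS (a :: b :: rest)) :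
    maxL (R (a :: b :: rest)) < maxL (a :: b :: rest) := by
  obtain ⟨-, hs, hpos⟩ := hp
  have ha : 0 < a := hpos a (by simp)
  have hlt : ∀ x ∈ b :: rest, a < x := ofs_cons_lt hs
  have hbM : b ≤ maxL (a :: b :: rest) := le_maxL_of_mem (by simp)
  have habM : a < maxL (a :: b :: rest) := lt_of_lt_of_le (hlt b (by simp)) hbM
  rcases maxL_mem_or_zero (R (a :: b :: rest)) with h0 | hm
  · omega
  · rcases mem_R_iff.1 hm with he | ⟨y, hy, he⟩
    · omega
    · have h1 := hlt y hy
      have h2 : y ≤ maxL (a :: b :: rest) := le_maxL_of_mem (List.mem_cons_of_mem _ hy)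
      omega
lemma maxL_le_head_add_maxL_R {a b : ℕ} {rest : List ℕ} (hp : OFS (a :: b :: rest)) :
    maxL (a :: b :: rest) ≤ a + maxL (R (a :: b :: rest)) := by
  obtain ⟨-, hs, hpos⟩ := hp
  have hlt : ∀ x ∈ b :: rest, a < x := ofs_cons_lt hs
  have hbpos : 0 < b := hpos b (by simp)
  have hbM : b ≤ maxL (a :: b :: rest) := le_maxL_of_mem (by simp)
  rcases maxL_mem_or_zero (a :: b :: rest) with h0 | hm
  · omega
  · rcases List.mem_cons.1 hm with he | hm
    · have := hlt b (by simp); omega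
    · have : maxL (a :: b :: rest) - a ∈ R (a :: b :: rest) :=
        mem_R_iff.2 (Or.inr ⟨_, hm, rfl⟩)
      have h1 := le_maxL_of_mem this
      have h2 := hlt _ hm
      omega
lemma faux_stable : ∀ n p, OFS p → maxL p < n → faux n p = f p := by
  intro n
  induction n using Nat.strong_induction_on with
  | _ n ih =>
    intro p hp hmax
    match p, hp with
    | [a], hp => cases n <;> simp [faux, f]
    | a :: b :: rest, hp =>
      have hb : 0 < b := hp.2.2 b (by simp)
      have hbM : b ≤ maxL (a :: b :: rest) := le_maxL_of_mem (by simp)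
      obtain ⟨m, rfl⟩ : ∃ m, n = m + 1 := ⟨n - 1, by omega⟩
      have hRofs := ofs_R hp
      have hRmax := maxL_R_lt hp
      have h1 : faux (m+1) (a :: b :: rest) = a + faux m (R (a :: b :: rest)) := rfl
      have h2 : f (a :: b :: rest) = a + faux (maxL (a :: b :: rest)) (R (a :: b :: rest)) := rfl
      rw [h1, h2, ih m (by omega) _ hRofs (by omega),
        ih (maxL (a :: b :: rest)) (by omega) _ hRofs (by omega)]
lemma f_cons (a b : ℕ) (rest : List ℕ) (hp : OFS (a :: b :: rest)) :
    f (a :: b :: rest) = a + f (R (a :: b :: rest)) := by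
  have h2 : f (a :: b :: rest) = a + faux (maxL (a :: b :: rest)) (R (a :: b :: rest)) := rfl
  rw [h2, faux_stable _ _ (ofs_R hp) (maxL_R_lt hp)]
lemma maxL_le_f : ∀ p, OFS p → maxL p ≤ f p := by
  suffices H : ∀ M p, OFS p → maxL p = M → maxL p ≤ f p by
    intro p hp; exact H (maxL p) p hp rfl
  intro M
  induction M using Nat.strong_induction_on with
  | _ M ih =>
    intro p hp hM
    subst hM
    match p, hp with
    | [a], hp => simp [f, faux, maxL]
    | a :: b :: rest, hp =>
      rw [f_cons a b rest hp]
      have h1 := ih _ (maxL_R_lt hp) _ (ofs_R hp) rfl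
      have h2 := maxL_le_head_add_maxL_R hp
      omega
lemma two_head_le_f {a b : ℕ} {rest : List ℕ} (hp : OFS (a :: b :: rest)) :
    2 * a ≤ f (a :: b :: rest) := by
  rw [f_cons a b rest hp]
  have h1 := le_maxL_of_mem (headI_mem_R a b rest)
  have h2 := maxL_le_f _ (ofs_R hp)
  omega

theorem fw_lower_bound (p : List ℕ) (hp : OFS p) (h : p.headI ≠ gcdL p) :
    2 * p.headI ≤ fw p := by
  suffices H : ∀ n p, OFS p → p.headI ≠ gcdL p → p.length = n → 2 * p.headI ≤ fw p from
    H p.length p hp h rfl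
  intro n
  induction n using Nat.strong_induction_on with
  | _ n ih =>
    intro p hp h hn
    rw [fw]
    split_ifs with hc
    · obtain ⟨hlen, hgcd, -⟩ := hc
      have hsub := List.dropLast_sublist p
      have hofs : OFS p.dropLast := by
        refine ⟨?_, hp.2.1.sublist hsub, fun x hx => hp.2.2 x (hsub.subset hx)⟩
        have : 0 < p.dropLast.length := by
          rw [List.length_dropLast]; omega
        exact List.ne_nil_of_length_pos this
      have hhead : p.dropLast.headI = p.headI := by
        match p, hlen with
        | a :: b :: rest, _ => simp
      have hlen' : p.dropLast.length = n - 1 := by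
        rw [List.length_dropLast, hn]
      refine le_trans ?_ (ih (n-1) (by omega) p.dropLast hofs ?_ hlen')
      · rw [hhead]
      · rw [hhead, hgcd]; exact h
    · match p, hp, h with
      | [a], hp, h =>
        exfalso
        exact h (by simp [gcdL])
      | a :: b :: rest, hp, h =>
        exact two_head_le_f hp
end

section
/- For every p ∈ OFS, f(p) ≤ min(p) + max(p) − gcd(p). -/
lemma le_maxL {l : List ℕ} {x : ℕ} (h : x ∈ l) : x ≤ maxL l := by
  induction l with
  | nil => simp at h
  | cons a t ih =>
    rcases List.mem_cons.mp h with rfl | h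
    · exact le_max_left _ _
    · exact le_trans (ih h) (le_max_right _ _)

lemma maxL_le {l : List ℕ} {m : ℕ} (h : ∀ x ∈ l, x ≤ m) : maxL l ≤ m := by
  induction l with
  | nil => simp [maxL]
  | cons a t ih =>
    exact max_le (h a (by simp)) (ih fun x hx => h x (List.mem_cons_of_mem _ hx))

lemma gcdL_dvd {l : List ℕ} {x : ℕ} (h : x ∈ l) : gcdL l ∣ x := by
  induction l with
  | nil => simp at h
  | cons a t ih =>
    rcases List.mem_cons.mp h with rfl | h
    · exact Nat.gcd_dvd_left _ _
    · exact dvd_trans (Nat.gcd_dvd_right _ _) (ih h)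

lemma dvd_gcdL {l : List ℕ} {d : ℕ} (h : ∀ x ∈ l, d ∣ x) : d ∣ gcdL l := by
  induction l with
  | nil => exact dvd_zero d
  | cons a t ih =>
    exact Nat.dvd_gcd (h a (by simp)) (ih fun x hx => h x (List.mem_cons_of_mem _ hx))

lemma headI_le_of_sorted {l : List ℕ} (h : l.Pairwise (· ≤ ·)) {x : ℕ} (hx : x ∈ l) :
    l.headI ≤ x := by
  cases l with
  | nil => simp at hx
  | cons c t =>
    rcases List.mem_cons.mp hx with rfl | hx
    · exact le_refl _
    · exact (List.pairwise_cons.mp h).1 x hx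

lemma key : ∀ M p, OFS p → maxL p ≤ M → ∀ fuel, maxL p < fuel →
    faux fuel p + gcdL p ≤ p.headI + maxL p := by
  intro M
  induction M with
  | zero =>
    intro p hp hM fuel _
    obtain ⟨hne, _, hpos⟩ := hp
    cases p with
    | nil => exact absurd rfl hne
    | cons a t =>
      have h1 := hpos a (by simp)
      have h2 : a ≤ maxL (a :: t) := le_maxL (by simp)
      omega
  | succ M ih =>
    intro p hp hM fuel hfuel
    obtain ⟨hne, hsort, hpos⟩ := hp
    cases p with
    | nil => exact absurd rfl hne
    | cons a t =>
      cases t with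
      | nil => simp [faux, maxL, gcdL]
      | cons b rest =>
        have ha_pos : 0 < a := hpos a (by simp)
        have haM : a ≤ maxL (a :: b :: rest) := le_maxL (by simp)
        cases fuel with
        | zero => omega
        | succ k =>
          set l : List ℕ := (b :: rest).map (fun x => x - a) with hl
          set q : List ℕ := (l.insert a).mergeSort (· ≤ ·) with hq
          have hRq : R (a :: b :: rest) = q := rfl
          have hmem : ∀ x, x ∈ q ↔ x = a ∨ ∃ y ∈ b :: rest, y - a = x := by
            intro x
            rw [hq, List.mem_mergeSort, List.mem_insert_iff, hl, List.mem_map]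
          have ha_lt : ∀ x ∈ b :: rest, a < x := (List.pairwise_cons.mp hsort).1
          have hxM : ∀ x ∈ b :: rest, x ≤ maxL (a :: b :: rest) :=
            fun x hx => le_maxL (List.mem_cons_of_mem _ hx)
          have hbM : b ≤ maxL (a :: b :: rest) := hxM b (by simp)
          have hab : a < b := ha_lt b (by simp)
          -- sortedness of q
          have hqs : q.Pairwise (· ≤ ·) := by
            have h := List.pairwise_mergeSort (le := fun x y : ℕ => x ≤ y)
              (fun a b c h1 h2 => by
                simp only [decide_eq_true_eq] at *; omega)
              (fun a b => by
                simp only [Bool.or_eq_true, decide_eq_true_eq]; omega)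
              (l.insert a)
            exact h.imp fun h => by simpa using h
          have hlsort : l.Pairwise (· < ·) := by
            rw [hl, List.pairwise_map]
            exact ((List.pairwise_cons.mp hsort).2).imp_of_mem
              (fun hx hy hxy => by have := ha_lt _ hx; omega)
          have hqnd : q.Nodup := by
            rw [hq, (List.mergeSort_perm (l.insert a) _).nodup_iff]
            exact List.Nodup.insert (hlsort.imp fun h => Nat.ne_of_lt h)
          have hqlt : q.Pairwise (· < ·) :=
            (hqs.and hqnd).imp fun h => lt_of_le_of_ne h.1 h.2
          have ha_mem : a ∈ q := (hmem a).mpr (Or.inl rfl)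
          have hba_mem : b - a ∈ q := (hmem _).mpr (Or.inr ⟨b, by simp, rfl⟩)
          have hOFSq : OFS q := by
            refine ⟨List.ne_nil_of_mem ha_mem, hqlt, fun x hx => ?_⟩
            rcases (hmem x).mp hx with rfl | ⟨y, hy, rfl⟩
            · exact ha_pos
            · have := ha_lt y hy; omega
          have hqmax : maxL q ≤ max a (maxL (a :: b :: rest) - a) := by
            refine maxL_le fun x hx => ?_
            rcases (hmem x).mp hx with rfl | ⟨y, hy, rfl⟩
            · exact le_max_left _ _
            · have := hxM y hy; omega
          have hh1 : q.headI ≤ a := headI_le_of_sorted hqs ha_mem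
          have hh2 : q.headI ≤ b - a := headI_le_of_sorted hqs hba_mem
          have hgdvd : gcdL (a :: b :: rest) ∣ gcdL q := by
            refine dvd_gcdL fun x hx => ?_
            rcases (hmem x).mp hx with rfl | ⟨y, hy, rfl⟩
            · exact gcdL_dvd (by simp)
            · exact Nat.dvd_sub (gcdL_dvd (List.mem_cons_of_mem _ hy)) (gcdL_dvd (by simp))
          have hgqpos : 0 < gcdL q :=
            Nat.pos_of_dvd_of_pos (gcdL_dvd ha_mem) ha_pos
          have hgle : gcdL (a :: b :: rest) ≤ gcdL q := Nat.le_of_dvd hgqpos hgdvd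
          have hIH := ih q hOFSq (by omega) k (by omega)
          have hfx : faux (k + 1) (a :: b :: rest) = a + faux k q := by
            rw [show faux (k+1) (a :: b :: rest)
              = (a :: b :: rest).headI + faux k (R (a :: b :: rest)) from rfl, hRq]
            rfl
          rw [hfx]
          simp only [List.headI]
          omega

theorem upper_bound_for_f (p : List ℕ) (hp : OFS p) :
    f p + gcdL p ≤ p.headI + maxL p := by
  exact key (maxL p) p hp le_rfl (maxL p + 1) (by omega)
end
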